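/- Let K be a field of characteristic 0, m = x_1^{α_1}⋯x_n^{α_n} with all α_i ≥ 1, f ∈ K[x_1,...,x_n] homogeneous of degree d = α_1+⋯+α_n, and A ∈ GL_n(K). Then m(A x) = c·f(x) for some nonzero constant c if and only if g_f = A⁻¹ g_m A, where g_P denotes the Lie algebra {B : Σ_{i,j} b_{ij} x_j ∂P/∂x_i = 0}. -/

import Mathlib

/-!
Substituting `x ↦ A x` intertwines the derivation `D_B = ∑ b_ij x_j ∂_i` with `D_{A B A⁻¹}`, so
`g_{P(Ax)} = A⁻¹ g_P A` for every `P`; as `g_{cP} = g_P` for `c ≠ 0`, this is the forward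
direction. Conversely, write `f(x) = g(Ax)`; the hypothesis becomes `g_g = g_m`. The operator
`D_{diag δ}` multiplies `x^β` by `∑ δ_k β_k`, so `diag (α_j e_i - α_i e_j) ∈ g_m` shows that every
exponent `β` of `g` satisfies `α_j β_i = α_i β_j`; with `|β| = |α|` this forces `β = α`,
i.e. `g` is a nonzero multiple of `m`.
-/

open MvPolynomial Matrix

theorem eq_of_cross_mul_eq_of_sum_eq {ι : Type*} [Fintype ι] {s β : ι → ℕ}
    (h : ∀ i j, s j * β i = s i * β j) (hsum : ∑ i, β i = ∑ i, s i) : β = s := by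
  funext i
  have hi : β i * ∑ j, s j = s i * ∑ j, s j := by
    rw [Finset.mul_sum, ← hsum, Finset.mul_sum]
    exact Finset.sum_congr rfl fun j _ => by rw [mul_comm, h]
  rcases Nat.eq_zero_or_pos (∑ j, s j) with h0 | hpos
  · rw [h0] at hsum
    rw [Finset.sum_eq_zero_iff.mp h0 i (Finset.mem_univ i),
      Finset.sum_eq_zero_iff.mp hsum i (Finset.mem_univ i)]
  · exact Nat.eq_of_mul_eq_mul_right hpos hi

theorem cross_mul_eq_of_forall_sum_mul_eq_zero {ι R : Type*} [Fintype ι] [DecidableEq ι]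
    [CommRing R] [CharZero R] {s β : ι → ℕ}
    (h : ∀ δ : ι → R, ∑ i, δ i * s i = 0 → ∑ i, δ i * β i = 0) (i j : ι) :
    s j * β i = s i * β j := by
  set δ : ι → R := Pi.single i (s j : R) - Pi.single j (s i : R)
  have hδ : ∀ v : ι → ℕ, ∑ k, δ k * v k = s j * v i - s i * v j := fun v => by
    simp [δ, sub_mul, Finset.sum_sub_distrib, Pi.single_apply, ite_mul]
  have hβ := h δ (by rw [hδ, mul_comm, sub_self])
  rw [hδ, sub_eq_zero] at hβ
  exact_mod_cast hβ

namespace MvPolynomial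

theorem derivation_aeval_eq_aeval_derivation {σ τ R : Type*} [CommSemiring R]
    (D₁ : Derivation R (MvPolynomial τ R) (MvPolynomial τ R))
    (D₂ : Derivation R (MvPolynomial σ R) (MvPolynomial σ R)) (v : σ → MvPolynomial τ R)
    (h : ∀ i, D₁ (v i) = aeval v (D₂ (X i))) (P : MvPolynomial σ R) :
    D₁ (aeval v P) = aeval v (D₂ P) := by
  induction P using MvPolynomial.induction_on with
  | C a => rw [aeval_C, Derivation.map_algebraMap, derivation_C, map_zero]
  | add p q hp hq => rw [map_add, map_add, hp, hq, map_add, map_add]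
  | mul_X p i hp =>
    simp only [map_mul, aeval_X, Derivation.leibniz, smul_eq_mul, hp, h, map_add]

section LinearSubstitution

variable {σ R : Type*} [Fintype σ] [CommSemiring R]

noncomputable def matrixDerivation (B : Matrix σ σ R) :
    Derivation R (MvPolynomial σ R) (MvPolynomial σ R) :=
  ∑ i, ∑ j, (C (B i j) * X j) • pderiv i

theorem matrixDerivation_apply (B : Matrix σ σ R) (P : MvPolynomial σ R) :
    matrixDerivation B P = ∑ i, ∑ j, C (B i j) * (X j * pderiv i P) := by
  rw [matrixDerivation, ← Derivation.coeFnAddMonoidHom_apply]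
  simp only [map_sum, Finset.sum_apply, Derivation.coeFnAddMonoidHom_apply,
    Derivation.smul_apply, smul_eq_mul, mul_assoc]

def lieAlgebraOf (P : MvPolynomial σ R) : Set (Matrix σ σ R) :=
  {B | ∑ i, ∑ j, C (B i j) * (X j * pderiv i P) = 0}

theorem mem_lieAlgebraOf {P : MvPolynomial σ R} {B : Matrix σ σ R} :
    B ∈ lieAlgebraOf P ↔ matrixDerivation B P = 0 := by
  rw [matrixDerivation_apply]
  rfl

theorem lieAlgebraOf_C_mul {c : R} (hc : IsUnit c) (P : MvPolynomial σ R) :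
    lieAlgebraOf (C c * P) = lieAlgebraOf P := by
  ext B
  rw [mem_lieAlgebraOf, mem_lieAlgebraOf, C_mul', Derivation.map_smul, hc.smul_eq_zero]

theorem prod_X_pow_eq_monomial_equivFunOnFinite (α : σ → ℕ) :
    ∏ k, X k ^ α k = monomial (Finsupp.equivFunOnFinite.symm α) (1 : R) := by
  rw [monomial_eq, C_1, one_mul, Finsupp.prod_fintype _ _ fun _ => pow_zero _]
  rfl

noncomputable def linSubst (A : Matrix σ σ R) (i : σ) : MvPolynomial σ R :=
  ∑ j, A i j • X j

theorem isHomogeneous_linSubst (A : Matrix σ σ R) (i : σ) : (linSubst A i).IsHomogeneous 1 :=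
  IsHomogeneous.sum _ _ _ fun j _ => by
    simpa only [smul_eq_C_mul] using (isHomogeneous_X R j).C_mul (A i j)

theorem IsHomogeneous.aeval_linSubst {P : MvPolynomial σ R} {d : ℕ} (hP : P.IsHomogeneous d)
    (A : Matrix σ σ R) : (MvPolynomial.aeval (linSubst A) P).IsHomogeneous d := by
  simpa using hP.aeval _ (isHomogeneous_linSubst A)

theorem aeval_linSubst_linSubst (A A' : Matrix σ σ R) (i : σ) :
    aeval (linSubst A) (linSubst A' i) = linSubst (A' * A) i := by
  simp only [linSubst, map_sum, map_smul, aeval_X, Finset.smul_sum, smul_smul,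
    Matrix.mul_apply, Finset.sum_smul]
  exact Finset.sum_comm

theorem aeval_linSubst_aeval_linSubst (A A' : Matrix σ σ R) (P : MvPolynomial σ R) :
    aeval (linSubst A) (aeval (linSubst A') P) = aeval (linSubst (A' * A)) P := by
  rw [comp_aeval_apply]
  simp only [aeval_linSubst_linSubst]

variable [DecidableEq σ]

theorem linSubst_one : linSubst (1 : Matrix σ σ R) = X := by
  funext i
  simp [linSubst, Matrix.one_apply, ite_smul]

theorem leftInverse_aeval_linSubst (A : GL σ R) :
    Function.LeftInverse (aeval (linSubst (↑A⁻¹ : Matrix σ σ R)))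
      (aeval (linSubst (A : Matrix σ σ R))) := fun P => by
  rw [aeval_linSubst_aeval_linSubst, A.mul_inv, linSubst_one, aeval_X_left_apply]

theorem matrixDerivation_X (B : Matrix σ σ R) (l : σ) :
    matrixDerivation B (X l) = linSubst B l := by
  simp [matrixDerivation_apply, linSubst, Pi.single_apply, smul_eq_C_mul]

theorem matrixDerivation_linSubst (A B : Matrix σ σ R) (i : σ) :
    matrixDerivation B (linSubst A i) = linSubst (A * B) i := by
  rw [linSubst, map_sum]
  simp only [Derivation.map_smul, matrixDerivation_X, linSubst, Finset.smul_sum, smul_smul,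
    Matrix.mul_apply, Finset.sum_smul]
  exact Finset.sum_comm

theorem matrixDerivation_aeval_linSubst {A B B' : Matrix σ σ R} (h : A * B = B' * A)
    (P : MvPolynomial σ R) :
    matrixDerivation B (aeval (linSubst A) P) = aeval (linSubst A) (matrixDerivation B' P) :=
  derivation_aeval_eq_aeval_derivation _ _ _ (fun i => by
    rw [matrixDerivation_linSubst, matrixDerivation_X, aeval_linSubst_linSubst, h]) P

theorem lieAlgebraOf_aeval_linSubst (A : GL σ R) (P : MvPolynomial σ R) :
    lieAlgebraOf (aeval (linSubst (A : Matrix σ σ R)) P) =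
      (fun B => (↑A⁻¹ : Matrix σ σ R) * B * (A : Matrix σ σ R)) '' lieAlgebraOf P := by
  rw [Set.image_eq_preimage_of_inverse
    (g := fun B => (A : Matrix σ σ R) * B * (↑A⁻¹ : Matrix σ σ R))
    (fun B => by simp [Matrix.mul_assoc]) (fun B => by simp [Matrix.mul_assoc])]
  ext B
  have hconj : (A : Matrix σ σ R) * B =
      ((A : Matrix σ σ R) * B * (↑A⁻¹ : Matrix σ σ R)) * (A : Matrix σ σ R) := by
    simp [Matrix.mul_assoc]
  rw [Set.mem_preimage, mem_lieAlgebraOf, mem_lieAlgebraOf,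
    matrixDerivation_aeval_linSubst hconj,
    (leftInverse_aeval_linSubst A).injective.eq_iff' (map_zero _)]

theorem lieAlgebraOf_aeval_linSubst_inj (A : GL σ R) {P Q : MvPolynomial σ R} :
    lieAlgebraOf (aeval (linSubst (A : Matrix σ σ R)) P) =
        lieAlgebraOf (aeval (linSubst (A : Matrix σ σ R)) Q) ↔
      lieAlgebraOf P = lieAlgebraOf Q := by
  simp only [lieAlgebraOf_aeval_linSubst]
  exact (Set.image_injective.mpr
    (A.isUnit.mul_left_injective.comp A⁻¹.isUnit.mul_right_injective)).eq_iff

theorem matrixDerivation_diagonal (δ : σ → R) (P : MvPolynomial σ R) :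
    matrixDerivation (diagonal δ) P = ∑ i, δ i • (X i * pderiv i P) := by
  simp [matrixDerivation_apply, diagonal_apply, apply_ite C, ite_mul, smul_eq_C_mul]

theorem matrixDerivation_diagonal_monomial (δ : σ → R) (s : σ →₀ ℕ) (a : R) :
    matrixDerivation (diagonal δ) (monomial s a) = (∑ i, δ i * s i) • monomial s a := by
  simp only [matrixDerivation_diagonal, X_mul_pderiv_monomial, ← Nat.cast_smul_eq_nsmul R,
    smul_smul, Finset.sum_smul]

theorem coeff_matrixDerivation_diagonal (δ : σ → R) (β : σ →₀ ℕ) (P : MvPolynomial σ R) :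
    coeff β (matrixDerivation (diagonal δ) P) = (∑ i, δ i * β i) * coeff β P := by
  induction P using MvPolynomial.induction_on' with
  | monomial s a =>
    rw [matrixDerivation_diagonal_monomial, coeff_smul, coeff_monomial]
    split_ifs with h
    · rw [h, smul_eq_mul]
    · rw [smul_zero, mul_zero]
  | add p q hp hq => rw [map_add, coeff_add, coeff_add, hp, hq, mul_add]

theorem diagonal_mem_lieAlgebraOf_monomial {δ : σ → R} {s : σ →₀ ℕ} (a : R)
    (h : ∑ i, δ i * s i = 0) : diagonal δ ∈ lieAlgebraOf (monomial s a) := by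
  rw [mem_lieAlgebraOf, matrixDerivation_diagonal_monomial, h, zero_smul]

theorem sum_mul_eq_zero_of_diagonal_mem [NoZeroDivisors R] {P : MvPolynomial σ R}
    {β : σ →₀ ℕ} (hβ : β ∈ P.support) {δ : σ → R} (hδ : diagonal δ ∈ lieAlgebraOf P) :
    ∑ i, δ i * β i = 0 := by
  have h := congrArg (coeff β) (mem_lieAlgebraOf.mp hδ)
  rw [coeff_matrixDerivation_diagonal, coeff_zero] at h
  exact (mul_eq_zero.mp h).resolve_right (mem_support_iff.mp hβ)

end LinearSubstitution

section CharZero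

variable {σ : Type*} [Fintype σ] [DecidableEq σ]

theorem eq_monomial_of_lieAlgebraOf_monomial_subset {R : Type*} [CommRing R]
    [NoZeroDivisors R] [CharZero R] {s : σ →₀ ℕ} {g : MvPolynomial σ R}
    (hg : g.IsHomogeneous s.degree) (h : lieAlgebraOf (monomial s (1 : R)) ⊆ lieAlgebraOf g) :
    g = monomial s (coeff s g) := by
  have hsupp : ∀ β ∈ g.support, β = s := fun β hβ => by
    have hdeg : β.degree = s.degree := (hg.degree_eq_sum_deg_support hβ).symm
    rw [Finsupp.degree_eq_sum, Finsupp.degree_eq_sum] at hdeg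
    refine DFunLike.coe_injective (eq_of_cross_mul_eq_of_sum_eq
      (cross_mul_eq_of_forall_sum_mul_eq_zero (R := R) fun δ hδ => ?_) hdeg)
    exact sum_mul_eq_zero_of_diagonal_mem hβ (h (diagonal_mem_lieAlgebraOf_monomial 1 hδ))
  ext β
  rw [coeff_monomial]
  split_ifs with hβ
  · rw [hβ]
  · by_contra hne
    exact hβ (hsupp β (mem_support_iff.mpr hne)).symm

theorem exists_aeval_linSubst_monomial_eq_C_mul_iff {K : Type*} [Field K] [CharZero K]
    {s : σ →₀ ℕ} {f : MvPolynomial σ K} (hf : f ≠ 0) (hhom : f.IsHomogeneous s.degree)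
    (A : GL σ K) :
    (∃ c : K, c ≠ 0 ∧ aeval (linSubst (A : Matrix σ σ K)) (monomial s (1 : K)) = C c * f) ↔
      lieAlgebraOf f = (fun B => (↑A⁻¹ : Matrix σ σ K) * B * (A : Matrix σ σ K)) ''
        lieAlgebraOf (monomial s 1) := by
  rw [← lieAlgebraOf_aeval_linSubst]
  constructor
  · rintro ⟨c, hc, hcf⟩
    rw [← lieAlgebraOf_C_mul hc.isUnit f, ← hcf]
  · intro h
    have hfg :
        aeval (linSubst (A : Matrix σ σ K)) (aeval (linSubst (↑A⁻¹ : Matrix σ σ K)) f) = f := by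
      simpa using leftInverse_aeval_linSubst A⁻¹ f
    have hghom := hhom.aeval_linSubst (↑A⁻¹ : Matrix σ σ K)
    generalize aeval (linSubst (↑A⁻¹ : Matrix σ σ K)) f = g at hfg hghom
    subst hfg
    rw [lieAlgebraOf_aeval_linSubst_inj] at h
    obtain ⟨c, rfl⟩ : ∃ c, g = monomial s c :=
      ⟨_, eq_monomial_of_lieAlgebraOf_monomial_subset hghom h.symm.subset⟩
    have hc : c ≠ 0 := by
      rintro rfl
      exact hf (by rw [monomial_zero, map_zero])
    refine ⟨c⁻¹, inv_ne_zero hc, ?_⟩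
    rw [show monomial s c = C c * monomial s (1 : K) by rw [C_mul_monomial, mul_one], map_mul,
      aeval_C, algebraMap_eq, ← mul_assoc, ← C_mul, inv_mul_cancel₀ hc, C_1, one_mul]

end CharZero

end MvPolynomial

theorem orbit_of_monomial_iff_conjugate_lie_algebras_general {n : ℕ} {K : Type*} [Field K] [CharZero K]
    (α : Fin n → ℕ) (f : MvPolynomial (Fin n) K) (hf : f ≠ 0)
    (hhom : f.IsHomogeneous (∑ i, α i)) (A : GL (Fin n) K) :
    (∃ c : K, c ≠ 0 ∧
        aeval (R := K)
          (fun i => ∑ j, (A : Matrix (Fin n) (Fin n) K) i j • (X j : MvPolynomial (Fin n) K))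
          (∏ k, X k ^ α k) = C c * f) ↔
      {B : Matrix (Fin n) (Fin n) K | ∑ i, ∑ j, C (B i j) * (X j * pderiv i f) = 0} =
        (fun B => (↑A⁻¹ : Matrix (Fin n) (Fin n) K) * B * (A : Matrix (Fin n) (Fin n) K)) ''
          {B : Matrix (Fin n) (Fin n) K |
            ∑ i, ∑ j, C (B i j) * (X j * pderiv i (∏ k, X k ^ α k)) = 0} := by
  rw [prod_X_pow_eq_monomial_equivFunOnFinite]
  exact exists_aeval_linSubst_monomial_eq_C_mul_iff (s := Finsupp.equivFunOnFinite.symm α)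
    hf (by simpa [Finsupp.degree_eq_sum] using hhom) A

theorem orbit_of_monomial_iff_conjugate_lie_algebras {n : ℕ} {K : Type*} [Field K] [CharZero K]
    (α : Fin n → ℕ) (hα : ∀ i, 1 ≤ α i) (f : MvPolynomial (Fin n) K) (hf : f ≠ 0)
    (hhom : f.IsHomogeneous (∑ i, α i)) (A : GL (Fin n) K) :
    (∃ c : K, c ≠ 0 ∧
        aeval (R := K)
          (fun i => ∑ j, (A : Matrix (Fin n) (Fin n) K) i j • (X j : MvPolynomial (Fin n) K))
          (∏ k, X k ^ α k) = C c * f) ↔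
      {B : Matrix (Fin n) (Fin n) K | ∑ i, ∑ j, C (B i j) * (X j * pderiv i f) = 0} =
        (fun B => (↑A⁻¹ : Matrix (Fin n) (Fin n) K) * B * (A : Matrix (Fin n) (Fin n) K)) ''
          {B : Matrix (Fin n) (Fin n) K |
            ∑ i, ∑ j, C (B i j) * (X j * pderiv i (∏ k, X k ^ α k)) = 0} :=
  orbit_of_monomial_iff_conjugate_lie_algebras_general α f hf hhom A
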